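/- arXiv:1311.3963 — 6 statements merged into one kernel-verified Lean document; each statement's English description precedes it below -/
import Mathlib

section
/- Let u, v be C¹ functions on B_ρⁿ(0) ⊂ ℝⁿ, and let X = v·e_{n+1} on ℝ^{n+1} (v extended independently of the last coordinate). Let P be the orthogonal projection of ℝ^{n+1} onto the tangent space of graph(u) at (x, u(x)). Then the operator norm of DX ∘ P satisfies ‖DX ∘ P‖ = √((1+|Du|²)|Dv|² − (Du·Dv)²) / √(1+|Du|²), and in particular ‖DX ∘ P‖ ≥ |Dv| / √(1+|Du|²). -/
/-!
`DX = e_{n+1} ⊗ Dv` has rank one, so by the symmetry of `P` we get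
`DX ∘ P = e_{n+1} ⊗ P(Dv, 0)`, whose norm is
`|P(Dv, 0)| = √(|Dv|² - ⟨ν, (Dv, 0)⟩²) = √(|Dv|² - (Du·Dv)² / (1 + |Du|²))`.
The lower bound is Cauchy–Schwarz, `(Du·Dv)² ≤ |Du|²|Dv|²`.
-/

open MeasureTheory Metric Set Filter
open scoped ENNReal Topology RealInnerProductSpace

open WithLp

theorem innerSL_smulRight_comp_starProjection {𝕜 E G : Type*} [RCLike 𝕜]
    [NormedAddCommGroup E] [InnerProductSpace 𝕜 E] [NormedAddCommGroup G] [NormedSpace 𝕜 G]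
    (K : Submodule 𝕜 E) [K.HasOrthogonalProjection] (g : E) (e : G) :
    ((innerSL 𝕜 g).smulRight e).comp K.starProjection
      = (innerSL 𝕜 (K.starProjection g)).smulRight e := by
  ext w
  simp [K.inner_starProjection_left_eq_right]

theorem norm_sq_starProjection_orthogonal_singleton {E : Type*} [NormedAddCommGroup E]
    [InnerProductSpace ℝ E] {ν : E} (hν : ‖ν‖ = 1) (g : E) :
    ‖(ℝ ∙ ν)ᗮ.starProjection g‖ ^ 2 = ‖g‖ ^ 2 - ⟪ν, g⟫ ^ 2 := by
  have hproj : ‖(ℝ ∙ ν).starProjection g‖ = |⟪ν, g⟫| := by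
    rw [Submodule.starProjection_singleton, hν, norm_smul, hν]
    simp
  rw [Submodule.norm_sq_eq_add_norm_sq_starProjection g (ℝ ∙ ν), hproj, sq_abs]
  ring

theorem sq_norm_le_one_add_sq_norm_mul_sq_norm_sub_inner_sq {F : Type*} [NormedAddCommGroup F]
    [InnerProductSpace ℝ F] (a b : F) :
    ‖b‖ ^ 2 ≤ (1 + ‖a‖ ^ 2) * ‖b‖ ^ 2 - ⟪a, b⟫ ^ 2 := by
  have hcs := sq_le_sq' (neg_le_of_abs_le (abs_real_inner_le_norm a b)) (real_inner_le_norm a b)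
  nlinarith

section Graph

variable {F : Type*} [NormedAddCommGroup F] [InnerProductSpace ℝ F]

noncomputable def graphNormal (a : F) : WithLp 2 (F × ℝ) :=
  (√(1 + ‖a‖ ^ 2))⁻¹ • toLp 2 (a, -1)

theorem norm_graphNormal (a : F) : ‖graphNormal a‖ = 1 := by
  have h : ‖toLp 2 (a, (-1 : ℝ))‖ = √(1 + ‖a‖ ^ 2) := by
    rw [← Real.sqrt_sq (norm_nonneg _), prod_norm_sq_eq_of_L2]
    simp [add_comm]
  rw [graphNormal, norm_smul, h, norm_inv, Real.norm_of_nonneg (Real.sqrt_nonneg _)]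
  exact inv_mul_cancel₀ (by positivity)

theorem inner_graphNormal_toLp_zero (a b : F) :
    ⟪graphNormal a, toLp 2 (b, 0)⟫ = ⟪a, b⟫ / √(1 + ‖a‖ ^ 2) := by
  simp [graphNormal, real_inner_smul_left, div_eq_inv_mul]

theorem norm_starProjection_orthogonal_graphNormal (a b : F) :
    ‖(ℝ ∙ graphNormal a)ᗮ.starProjection (toLp 2 (b, 0))‖
      = √((1 + ‖a‖ ^ 2) * ‖b‖ ^ 2 - ⟪a, b⟫ ^ 2) / √(1 + ‖a‖ ^ 2) := by
  have hs : 0 < 1 + ‖a‖ ^ 2 := by positivity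
  have hN : 0 ≤ (1 + ‖a‖ ^ 2) * ‖b‖ ^ 2 - ⟪a, b⟫ ^ 2 :=
    (sq_nonneg _).trans (sq_norm_le_one_add_sq_norm_mul_sq_norm_sub_inner_sq a b)
  rw [← Real.sqrt_div hN, ← Real.sqrt_sq (norm_nonneg _),
    norm_sq_starProjection_orthogonal_singleton (norm_graphNormal a),
    inner_graphNormal_toLp_zero, prod_norm_sq_eq_of_L2, div_pow, Real.sq_sqrt hs.le]
  congr 1
  simp only [toLp_fst, toLp_snd, norm_zero]
  field_simp
  ring

variable [CompleteSpace F]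

theorem hasFDerivAt_toLp_zero_comp_fst {v : F → ℝ} {b : F} {p : WithLp 2 (F × ℝ)}
    (hv : HasGradientAt v b (ofLp p).1) :
    HasFDerivAt (fun y : WithLp 2 (F × ℝ) => toLp 2 ((0 : F), v (ofLp y).1))
      ((innerSL ℝ (toLp 2 (b, 0))).smulRight (toLp 2 (0, 1))) p := by
  have hc : HasFDerivAt (fun y : WithLp 2 (F × ℝ) => v (ofLp y).1)
      (innerSL ℝ (toLp 2 (b, 0))) p := by
    refine ((hasGradientAt_iff_hasFDerivAt.1 hv).comp p
      (fstL 2 ℝ F ℝ).hasFDerivAt).congr_fderiv ?_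
    ext w
    simp
  refine (hc.smul_const (toLp 2 ((0 : F), (1 : ℝ)))).congr_of_eventuallyEq
    (Eventually.of_forall fun y => ?_)
  simp [← toLp_smul]

theorem norm_fderiv_comp_starProjection_orthogonal_graphNormal {v : F → ℝ} {b x : F}
    (hv : HasGradientAt v b x) (a : F) (t : ℝ) :
    ‖(fderiv ℝ (fun y : WithLp 2 (F × ℝ) => toLp 2 ((0 : F), v (ofLp y).1))
        (toLp 2 (x, t))).comp (ℝ ∙ graphNormal a)ᗮ.starProjection‖
      = √((1 + ‖a‖ ^ 2) * ‖b‖ ^ 2 - ⟪a, b⟫ ^ 2) / √(1 + ‖a‖ ^ 2) := by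
  rw [(hasFDerivAt_toLp_zero_comp_fst (p := toLp 2 (x, t)) hv).fderiv,
    innerSL_smulRight_comp_starProjection, ContinuousLinearMap.norm_smulRight_apply, innerSL_apply_norm,
    norm_toLp_snd, norm_one, mul_one]
  exact norm_starProjection_orthogonal_graphNormal a b

end Graph

theorem stmt1_general (n : ℕ)
    (u v : EuclideanSpace ℝ (Fin n) → ℝ)
    (hv : ContDiff ℝ 1 v)
    (x : EuclideanSpace ℝ (Fin n))
    (X : WithLp 2 (EuclideanSpace ℝ (Fin n) × ℝ) → WithLp 2 (EuclideanSpace ℝ (Fin n) × ℝ))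
    (hX : X = fun y =>
      (WithLp.equiv 2 (EuclideanSpace ℝ (Fin n) × ℝ)).symm
        (0, v (WithLp.equiv 2 (EuclideanSpace ℝ (Fin n) × ℝ) y).1))
    (p : WithLp 2 (EuclideanSpace ℝ (Fin n) × ℝ))
    (hp : p = (WithLp.equiv 2 (EuclideanSpace ℝ (Fin n) × ℝ)).symm (x, u x))
    (ν : WithLp 2 (EuclideanSpace ℝ (Fin n) × ℝ))
    (hν : ν = (Real.sqrt (1 + ‖gradient u x‖ ^ 2))⁻¹ •
      (WithLp.equiv 2 (EuclideanSpace ℝ (Fin n) × ℝ)).symm (gradient u x, -1))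
    (P : WithLp 2 (EuclideanSpace ℝ (Fin n) × ℝ) →L[ℝ] WithLp 2 (EuclideanSpace ℝ (Fin n) × ℝ))
    (hP : P = ((ℝ ∙ ν)ᗮ).subtypeL.comp (Submodule.orthogonalProjectionOnto (ℝ ∙ ν)ᗮ)) :
    ‖(fderiv ℝ X p).comp P‖
        = Real.sqrt ((1 + ‖gradient u x‖ ^ 2) * ‖gradient v x‖ ^ 2
            - ⟪gradient u x, gradient v x⟫ ^ 2) / Real.sqrt (1 + ‖gradient u x‖ ^ 2)
      ∧ ‖(fderiv ℝ X p).comp P‖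
        ≥ ‖gradient v x‖ / Real.sqrt (1 + ‖gradient u x‖ ^ 2) := by
  subst hX hp hν hP
  have hnorm := norm_fderiv_comp_starProjection_orthogonal_graphNormal
    (hv.differentiable one_ne_zero x).hasGradientAt (gradient u x) (u x)
  refine ⟨hnorm, le_of_le_of_eq ?_ hnorm.symm⟩
  gcongr
  exact Real.le_sqrt_of_sq_le (sq_norm_le_one_add_sq_norm_mul_sq_norm_sub_inner_sq _ _)

/-- For `X = v·e_{n+1}` and `P` the orthogonal projection onto the
tangent space of `graph u` at `(x, u x)` (the orthogonal complement of the normal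
`ν = (Du,-1)/√(1+|Du|²)`), the operator norm of `DX ∘ P` equals
`√((1+|Du|²)|Dv|² − (Du·Dv)²)/√(1+|Du|²)`, and in particular is at least
`|Dv|/√(1+|Du|²)`. -/
theorem stmt1 (n : ℕ) (ρ : ℝ) (hρ : 0 < ρ)
    (u v : EuclideanSpace ℝ (Fin n) → ℝ)
    (hu : ContDiffOn ℝ 1 u (ball 0 ρ)) (hv : ContDiff ℝ 1 v)
    (x : EuclideanSpace ℝ (Fin n)) (hx : x ∈ ball (0 : EuclideanSpace ℝ (Fin n)) ρ)
    (X : WithLp 2 (EuclideanSpace ℝ (Fin n) × ℝ) → WithLp 2 (EuclideanSpace ℝ (Fin n) × ℝ))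
    (hX : X = fun y =>
      (WithLp.equiv 2 (EuclideanSpace ℝ (Fin n) × ℝ)).symm
        (0, v (WithLp.equiv 2 (EuclideanSpace ℝ (Fin n) × ℝ) y).1))
    (p : WithLp 2 (EuclideanSpace ℝ (Fin n) × ℝ))
    (hp : p = (WithLp.equiv 2 (EuclideanSpace ℝ (Fin n) × ℝ)).symm (x, u x))
    (ν : WithLp 2 (EuclideanSpace ℝ (Fin n) × ℝ))
    (hν : ν = (Real.sqrt (1 + ‖gradient u x‖ ^ 2))⁻¹ •
      (WithLp.equiv 2 (EuclideanSpace ℝ (Fin n) × ℝ)).symm (gradient u x, -1))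
    (P : WithLp 2 (EuclideanSpace ℝ (Fin n) × ℝ) →L[ℝ] WithLp 2 (EuclideanSpace ℝ (Fin n) × ℝ))
    (hP : P = ((ℝ ∙ ν)ᗮ).subtypeL.comp (Submodule.orthogonalProjectionOnto (ℝ ∙ ν)ᗮ)) :
    ‖(fderiv ℝ X p).comp P‖
        = Real.sqrt ((1 + ‖gradient u x‖ ^ 2) * ‖gradient v x‖ ^ 2
            - ⟪gradient u x, gradient v x⟫ ^ 2) / Real.sqrt (1 + ‖gradient u x‖ ^ 2)
      ∧ ‖(fderiv ℝ X p).comp P‖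
        ≥ ‖gradient v x‖ / Real.sqrt (1 + ‖gradient u x‖ ^ 2) :=
  stmt1_general n u v hv x X hX p hp ν hν P hP
end

section
/- Let u ∈ C¹(B_ρⁿ(0)) with u(0)=0, Du(0)=0, and suppose Du is α-Hölder continuous with seminorm [Du]_α on B_ρⁿ(0). Then for every v ∈ C¹_c(B_ρⁿ(0)), ∫_{B_ρⁿ(0)} (Dv · Du)/√(1+|Du|²) dx ≤ [Du]_α · ρ^α · ∫_{B_ρⁿ(0)} √((1+|Du|²)|Dv|² − (Du·Dv)²) dx. -/
open MeasureTheory Metric Set Filter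
open scoped ENNReal Topology RealInnerProductSpace

/-!
The first variation of area is bounded pointwise: by Cauchy–Schwarz,
`⟪Dv, Du⟫ / √(1 + |Du|²) ≤ |Du| |Dv|`, and
`(1 + |Du|²) |Dv|² - ⟪Du, Dv⟫² = |Dv|² + (|Du|² |Dv|² - ⟪Du, Dv⟫²) ≥ |Dv|²`.
Since `Du(0) = 0`, the Hölder bound gives `|Du(x)| ≤ [Du]_α |x|^α ≤ [Du]_α ρ^α` on the ball,
and the pointwise inequality integrates because both integrands are continuous on the ball and
vanish off the compact set `tsupport v`.
-/

section Gradient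

variable {𝕜 F : Type*} [RCLike 𝕜] [NormedAddCommGroup F] [InnerProductSpace 𝕜 F] [CompleteSpace F]
  {f : F → 𝕜}

theorem ContDiff.continuous_gradient {n : WithTop ℕ∞} (hf : ContDiff 𝕜 n f) (hn : n ≠ 0) :
    Continuous (gradient f) :=
  (InnerProductSpace.toDual 𝕜 F).symm.continuous.comp (hf.continuous_fderiv hn)

theorem gradient_eq_zero_of_notMem_tsupport {x : F} (hx : x ∉ tsupport f) : gradient f x = 0 := by
  rw [gradient, image_eq_zero_of_notMem_tsupport fun h => hx (tsupport_fderiv_subset 𝕜 h),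
    map_zero]

end Gradient

theorem continuousOn_of_norm_sub_le_mul_rpow {E G : Type*} [SeminormedAddCommGroup E]
    [SeminormedAddCommGroup G] {g : E → G} {s : Set E} {C α : ℝ} (hα : 0 < α)
    (hg : ∀ x ∈ s, ∀ y ∈ s, ‖g x - g y‖ ≤ C * ‖x - y‖ ^ α) : ContinuousOn g s := by
  intro x hx
  rw [ContinuousWithinAt, tendsto_iff_norm_sub_tendsto_zero]
  have hlim : Tendsto (fun y => C * ‖y - x‖ ^ α) (𝓝[s] x) (𝓝 0) := by
    have : Continuous fun y => C * ‖y - x‖ ^ α := by fun_prop (disch := exact hα.le)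
    simpa [Real.zero_rpow hα.ne'] using (this.tendsto x).mono_left nhdsWithin_le_nhds
  exact squeeze_zero' (Eventually.of_forall fun _ => norm_nonneg _)
    (eventually_nhdsWithin_of_forall fun y hy => hg y hy x hx) hlim

section AreaIntegrands

variable {E : Type*} [NormedAddCommGroup E] [InnerProductSpace ℝ E]

theorem real_inner_div_sqrt_one_add_norm_sq_le (a b : E) :
    ⟪b, a⟫ / Real.sqrt (1 + ‖a‖ ^ 2) ≤ ‖a‖ * ‖b‖ := by
  have hs : 1 ≤ Real.sqrt (1 + ‖a‖ ^ 2) := Real.one_le_sqrt.2 (le_add_of_nonneg_right (sq_nonneg _))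
  calc ⟪b, a⟫ / Real.sqrt (1 + ‖a‖ ^ 2)
      ≤ |⟪b, a⟫| / Real.sqrt (1 + ‖a‖ ^ 2) :=
        div_le_div_of_nonneg_right (le_abs_self _) (Real.sqrt_nonneg _)
    _ ≤ |⟪b, a⟫| := div_le_self (abs_nonneg _) hs
    _ ≤ ‖b‖ * ‖a‖ := abs_real_inner_le_norm b a
    _ = ‖a‖ * ‖b‖ := mul_comm _ _

theorem norm_le_sqrt_one_add_norm_sq_mul_sub_inner_sq (a b : E) :
    ‖b‖ ≤ Real.sqrt ((1 + ‖a‖ ^ 2) * ‖b‖ ^ 2 - ⟪a, b⟫ ^ 2) := by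
  have hcs : ⟪a, b⟫ ^ 2 ≤ ‖a‖ ^ 2 * ‖b‖ ^ 2 := by
    rw [← mul_pow, ← sq_abs]
    exact pow_le_pow_left₀ (abs_nonneg _) (abs_real_inner_le_norm a b) 2
  exact Real.le_sqrt_of_sq_le (by nlinarith)

theorem real_inner_div_sqrt_le_mul_sqrt {a b : E} {K : ℝ} (ha : ‖a‖ ≤ K) :
    ⟪b, a⟫ / Real.sqrt (1 + ‖a‖ ^ 2)
      ≤ K * Real.sqrt ((1 + ‖a‖ ^ 2) * ‖b‖ ^ 2 - ⟪a, b⟫ ^ 2) :=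
  calc ⟪b, a⟫ / Real.sqrt (1 + ‖a‖ ^ 2) ≤ ‖a‖ * ‖b‖ := real_inner_div_sqrt_one_add_norm_sq_le a b
    _ ≤ K * Real.sqrt ((1 + ‖a‖ ^ 2) * ‖b‖ ^ 2 - ⟪a, b⟫ ^ 2) := by
      gcongr
      · exact (norm_nonneg a).trans ha
      · exact norm_le_sqrt_one_add_norm_sq_mul_sub_inner_sq a b

end AreaIntegrands

theorem ContinuousOn.integrableOn_of_eq_zero_outside_compact {X G : Type*} [TopologicalSpace X]
    [T2Space X] [MeasurableSpace X] [OpensMeasurableSpace X] [NormedAddCommGroup G]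
    {μ : Measure X} [IsFiniteMeasureOnCompacts μ] {s K : Set X} {g : X → G}
    (hg : ContinuousOn g s) (hs : MeasurableSet s) (hK : IsCompact K) (hKs : K ⊆ s)
    (hg0 : ∀ x ∉ K, g x = 0) : IntegrableOn g s μ :=
  ((hg.mono hKs).integrableOn_compact hK).of_forall_sdiff_eq_zero hs fun x hx => hg0 x hx.2

theorem stmt2_general (n : ℕ) (α ρ C : ℝ) (hα : α ∈ Set.Ioo (0:ℝ) 1) (hρ : 0 < ρ) (hC : 0 ≤ C)
    (u : EuclideanSpace ℝ (Fin n) → ℝ)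
    (hDu0 : gradient u 0 = 0)
    (hHolder : ∀ x ∈ ball (0 : EuclideanSpace ℝ (Fin n)) ρ,
      ∀ y ∈ ball (0 : EuclideanSpace ℝ (Fin n)) ρ,
        ‖gradient u x - gradient u y‖ ≤ C * ‖x - y‖ ^ α)
    (v : EuclideanSpace ℝ (Fin n) → ℝ)
    (hv : ContDiff ℝ 1 v) (hvc : HasCompactSupport v)
    (hvs : tsupport v ⊆ ball 0 ρ) :
    ∫ x in ball (0 : EuclideanSpace ℝ (Fin n)) ρ,
        ⟪gradient v x, gradient u x⟫ / Real.sqrt (1 + ‖gradient u x‖ ^ 2)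
      ≤ C * ρ ^ α *
        ∫ x in ball (0 : EuclideanSpace ℝ (Fin n)) ρ,
          Real.sqrt ((1 + ‖gradient u x‖ ^ 2) * ‖gradient v x‖ ^ 2
            - ⟪gradient u x, gradient v x⟫ ^ 2) := by
  have hDu : ContinuousOn (gradient u) (ball 0 ρ) :=
    continuousOn_of_norm_sub_le_mul_rpow hα.1 hHolder
  have hDv : Continuous (gradient v) := hv.continuous_gradient one_ne_zero
  have hDu_le : ∀ x ∈ ball (0 : EuclideanSpace ℝ (Fin n)) ρ, ‖gradient u x‖ ≤ C * ρ ^ α := by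
    intro x hx
    have hx' : ‖x‖ ≤ ρ := (mem_ball_zero_iff.1 hx).le
    calc ‖gradient u x‖ = ‖gradient u x - gradient u 0‖ := by rw [hDu0, sub_zero]
      _ ≤ C * ‖x - 0‖ ^ α := hHolder x hx 0 (mem_ball_self hρ)
      _ ≤ C * ρ ^ α := by rw [sub_zero]; gcongr; exact hα.1.le
  have hDv0 : ∀ x ∉ tsupport v, gradient v x = 0 := fun x hx =>
    gradient_eq_zero_of_notMem_tsupport hx
  rw [← integral_const_mul]
  refine setIntegral_mono_on ?_ ?_ measurableSet_ball fun x hx =>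
    real_inner_div_sqrt_le_mul_sqrt (hDu_le x hx)
  · exact ContinuousOn.integrableOn_of_eq_zero_outside_compact
      (by fun_prop (disch := intro x _; positivity)) measurableSet_ball hvc hvs
      fun x hx => by simp [hDv0 x hx]
  · refine Integrable.const_mul ?_ _
    exact ContinuousOn.integrableOn_of_eq_zero_outside_compact (by fun_prop) measurableSet_ball
      hvc hvs fun x hx => by simp [hDv0 x hx]

/-- If `u ∈ C¹(B_ρ)` with `u 0 = 0`, `Du 0 = 0` and `Du` is
`α`-Hölder with seminorm `[Du]_α` on the ball, then for every `v ∈ C¹_c(B_ρ)`,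
`∫ (Dv·Du)/√(1+|Du|²) ≤ [Du]_α ρ^α ∫ √((1+|Du|²)|Dv|² − (Du·Dv)²)`. -/
theorem stmt2 (n : ℕ) (α ρ C : ℝ) (hα : α ∈ Set.Ioo (0:ℝ) 1) (hρ : 0 < ρ) (hC : 0 ≤ C)
    (u : EuclideanSpace ℝ (Fin n) → ℝ)
    (hu : ContDiffOn ℝ 1 u (ball 0 ρ))
    (hu0 : u 0 = 0) (hDu0 : gradient u 0 = 0)
    (hHolder : ∀ x ∈ ball (0 : EuclideanSpace ℝ (Fin n)) ρ,
      ∀ y ∈ ball (0 : EuclideanSpace ℝ (Fin n)) ρ,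
        ‖gradient u x - gradient u y‖ ≤ C * ‖x - y‖ ^ α)
    (v : EuclideanSpace ℝ (Fin n) → ℝ)
    (hv : ContDiff ℝ 1 v) (hvc : HasCompactSupport v)
    (hvs : tsupport v ⊆ ball 0 ρ) :
    ∫ x in ball (0 : EuclideanSpace ℝ (Fin n)) ρ,
        ⟪gradient v x, gradient u x⟫ / Real.sqrt (1 + ‖gradient u x‖ ^ 2)
      ≤ C * ρ ^ α *
        ∫ x in ball (0 : EuclideanSpace ℝ (Fin n)) ρ,
          Real.sqrt ((1 + ‖gradient u x‖ ^ 2) * ‖gradient v x‖ ^ 2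
            - ⟪gradient u x, gradient v x⟫ ^ 2) :=
  stmt2_general n α ρ C hα hρ hC u hDu0 hHolder v hv hvc hvs
end

section
/- Let S be an n-dimensional subspace of ℝ^{n+k}, γ : ℝ → [0,1] a C¹ function, and X(x) = γ(|x|)·x. Then the divergence of X along S at a point x with r = |x| > 0 equals n·γ(r) + r·γ'(r)·(1 − |P_{S^⊥}(x/r)|²), where P_{S^⊥} is the orthogonal projection onto the orthogonal complement of S. -/
/-!
The derivative of `X` at `x ≠ 0` is `DX = γ(r) I + (γ'(r) / r) x ⊗ x`. Since `P_S` is an orthogonal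
projection, `tr P_S = dim S = n` and `tr (P_S ∘ (x ⊗ x)) = ⟪x, P_S x⟫ = |P_S x|² = r² - |P_{S^⊥} x|²`.
-/

open Module
open scoped RealInnerProductSpace

section RadialField

variable {E : Type*} [NormedAddCommGroup E] [InnerProductSpace ℝ E]

theorem hasFDerivAt_norm_of_ne_zero {x : E} (hx : x ≠ 0) :
    HasFDerivAt (‖·‖) (‖x‖⁻¹ • innerSL ℝ x) x := by
  have h := (hasStrictFDerivAt_norm_sq x).hasFDerivAt.sqrt (by positivity)
  simp only [Real.sqrt_sq (norm_nonneg _)] at h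
  convert h using 1
  ext v
  simp
  ring

theorem hasFDerivAt_radialField {γ : ℝ → ℝ} {x : E} (hx : x ≠ 0)
    (hγ : DifferentiableAt ℝ γ ‖x‖) :
    HasFDerivAt (fun y => γ ‖y‖ • y)
      (γ ‖x‖ • ContinuousLinearMap.id ℝ E + (deriv γ ‖x‖ • ‖x‖⁻¹ • innerSL ℝ x).smulRight x) x :=
  (hγ.hasDerivAt.comp_hasFDerivAt x (hasFDerivAt_norm_of_ne_zero hx)).smul (hasFDerivAt_id x)

end RadialField

namespace Submodule

variable {E : Type*} [NormedAddCommGroup E] [InnerProductSpace ℝ E] [FiniteDimensional ℝ E]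
  (K : Submodule ℝ E)

theorem trace_starProjection :
    LinearMap.trace ℝ E K.starProjection = finrank ℝ K := by
  have h := (LinearMap.IsIdempotentElem.isProj_range _
    (ContinuousLinearMap.IsIdempotentElem.toLinearMap K.isIdempotentElem_starProjection)).trace
  rwa [show (K.starProjection : E →ₗ[ℝ] E).range = K from K.range_starProjection] at h

theorem real_inner_self_starProjection (x : E) :
    ⟪x, K.starProjection x⟫ = ‖x‖ ^ 2 - ‖Kᗮ.starProjection x‖ ^ 2 := by
  rw [real_inner_comm, ← RCLike.re_to_real (x := ⟪_, _⟫), re_inner_starProjection_eq_normSq,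
    norm_sq_eq_add_norm_sq_starProjection x K]
  simp

theorem trace_starProjection_comp_smul_id_add_smulRight (c : ℝ) (f : E →L[ℝ] ℝ) (v : E) :
    LinearMap.trace ℝ E (K.starProjection ∘L (c • ContinuousLinearMap.id ℝ E + f.smulRight v))
      = c * finrank ℝ K + f (K.starProjection v) := by
  have h : K.starProjection ∘L (c • ContinuousLinearMap.id ℝ E + f.smulRight v)
      = c • K.starProjection + f.smulRight (K.starProjection v) := by
    ext; simp
  rw [h, ContinuousLinearMap.toLinearMap_add, ContinuousLinearMap.toLinearMap_smul, map_add,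
    map_smul, trace_starProjection]
  simp

end Submodule

theorem stmt4_general (n k : ℕ) (γ : ℝ → ℝ) (hγ : ContDiff ℝ 1 γ)
    (x : EuclideanSpace ℝ (Fin (n + k))) (hx : 0 < ‖x‖)
    (S : Submodule ℝ (EuclideanSpace ℝ (Fin (n + k)))) (hS : Module.finrank ℝ S = n)
    (P : EuclideanSpace ℝ (Fin (n + k)) →L[ℝ] EuclideanSpace ℝ (Fin (n + k)))
    (hP : P = S.subtypeL.comp S.orthogonalProjection)
    (Pperp : EuclideanSpace ℝ (Fin (n + k)) →L[ℝ] EuclideanSpace ℝ (Fin (n + k)))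
    (hPperp : Pperp = Sᗮ.subtypeL.comp Sᗮ.orthogonalProjection)
    (X : EuclideanSpace ℝ (Fin (n + k)) → EuclideanSpace ℝ (Fin (n + k)))
    (hX : X = fun y => γ ‖y‖ • y) :
    LinearMap.trace ℝ (EuclideanSpace ℝ (Fin (n + k)))
        ((P.comp (fderiv ℝ X x)) : EuclideanSpace ℝ (Fin (n + k)) →ₗ[ℝ]
          EuclideanSpace ℝ (Fin (n + k)))
      = n * γ ‖x‖ + ‖x‖ * deriv γ ‖x‖ * (1 - ‖Pperp (‖x‖⁻¹ • x)‖ ^ 2) := by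
  change P = S.starProjection at hP
  change Pperp = Sᗮ.starProjection at hPperp
  subst hP hPperp hX
  have hDX := hasFDerivAt_radialField (norm_pos_iff.mp hx) (hγ.differentiable one_ne_zero _)
  rw [hDX.fderiv, S.trace_starProjection_comp_smul_id_add_smulRight, hS, map_smul, norm_smul,
    Real.norm_of_nonneg (inv_nonneg.mpr hx.le)]
  simp only [smul_apply, innerSL_apply_apply, S.real_inner_self_starProjection, smul_eq_mul]
  field_simp

/-- For `X(x) = γ(|x|)x` and an `n`-dimensional subspace
`S ⊆ ℝ^{n+k}`, the divergence of `X` along `S` at a point `x` with `r = |x| > 0`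
is `div_S X = tr(P_S ∘ DX) = nγ(r) + rγ'(r)(1 − |P_{S^⊥}(x/r)|²)`. -/
theorem stmt4 (n k : ℕ) (γ : ℝ → ℝ) (hγ : ContDiff ℝ 1 γ)
    (hγr : ∀ t, γ t ∈ Set.Icc (0:ℝ) 1)
    (x : EuclideanSpace ℝ (Fin (n + k))) (hx : 0 < ‖x‖)
    (S : Submodule ℝ (EuclideanSpace ℝ (Fin (n + k)))) (hS : Module.finrank ℝ S = n)
    (P : EuclideanSpace ℝ (Fin (n + k)) →L[ℝ] EuclideanSpace ℝ (Fin (n + k)))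
    (hP : P = S.subtypeL.comp S.orthogonalProjection)
    (Pperp : EuclideanSpace ℝ (Fin (n + k)) →L[ℝ] EuclideanSpace ℝ (Fin (n + k)))
    (hPperp : Pperp = Sᗮ.subtypeL.comp Sᗮ.orthogonalProjection)
    (X : EuclideanSpace ℝ (Fin (n + k)) → EuclideanSpace ℝ (Fin (n + k)))
    (hX : X = fun y => γ ‖y‖ • y) :
    LinearMap.trace ℝ (EuclideanSpace ℝ (Fin (n + k)))
        ((P.comp (fderiv ℝ X x)) : EuclideanSpace ℝ (Fin (n + k)) →ₗ[ℝ]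
          EuclideanSpace ℝ (Fin (n + k)))
      = n * γ ‖x‖ + ‖x‖ * deriv γ ‖x‖ * (1 - ‖Pperp (‖x‖⁻¹ • x)‖ ^ 2) :=
  stmt4_general n k γ hγ x hx S hS P hP Pperp hPperp X hX
end

section
/- Let α ∈ (0,1), K ≥ 0, K₀ = 2K(n+1)/α, and let F, G : (0, R] → ℝ be C¹ functions with G' ≥ 0. Suppose that for all ρ ∈ (0, R] with Kρ^α ≤ 1/2 one has F'(ρ) + (K(n+1)ρ^{α−1}/(1+Kρ^α))·F(ρ) ≥ (1/(1+Kρ^α))·G'(ρ) and F ≥ 0. Then for all 0 < σ < ρ ≤ R with Kρ^α ≤ 1/2, e^{K₀ρ^α}·F(ρ) ≥ e^{K₀σ^α}·F(σ) + (1/2)·(G(ρ) − G(σ)). -/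
open Set Filter
open scoped Topology

/-- The ODE/integration step for the lower monotonicity formula:
if `F' + (K(n+1)ρ^{α−1}/(1+Kρ^α))F ≥ G'/(1+Kρ^α)` on `(0,R]` wherever
`Kρ^α ≤ 1/2`, with `F ≥ 0`, `G' ≥ 0`, then for `0 < σ < ρ ≤ R` with
`Kρ^α ≤ 1/2`, `e^{K₀ρ^α}F(ρ) ≥ e^{K₀σ^α}F(σ) + (G(ρ)−G(σ))/2`,
where `K₀ = 2K(n+1)/α`. -/
theorem stmt5 (n : ℕ) (α K K₀ R : ℝ) (hα : α ∈ Set.Ioo (0:ℝ) 1) (hK : 0 ≤ K)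
    (hK₀ : K₀ = 2 * K * (n + 1) / α) (hR : 0 < R)
    (F G : ℝ → ℝ)
    (hF : ∀ ρ ∈ Set.Ioc (0:ℝ) R, DifferentiableAt ℝ F ρ)
    (hG : ∀ ρ ∈ Set.Ioc (0:ℝ) R, DifferentiableAt ℝ G ρ)
    (hG' : ∀ ρ ∈ Set.Ioc (0:ℝ) R, 0 ≤ deriv G ρ)
    (hFpos : ∀ ρ ∈ Set.Ioc (0:ℝ) R, 0 ≤ F ρ)
    (hineq : ∀ ρ ∈ Set.Ioc (0:ℝ) R, K * ρ ^ α ≤ 1 / 2 →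
      deriv F ρ + (K * (n + 1) * ρ ^ (α - 1) / (1 + K * ρ ^ α)) * F ρ
        ≥ (1 / (1 + K * ρ ^ α)) * deriv G ρ) :
    ∀ σ ρ : ℝ, 0 < σ → σ < ρ → ρ ≤ R → K * ρ ^ α ≤ 1 / 2 →
      Real.exp (K₀ * ρ ^ α) * F ρ
        ≥ Real.exp (K₀ * σ ^ α) * F σ + (1 / 2) * (G ρ - G σ) := by
  obtain ⟨hα0, hα1⟩ := hα
  intro σ ρ hσ hσρ hρR hKρ
  have hK₀0 : 0 ≤ K₀ := by rw [hK₀]; positivity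
  have hK₀α : K₀ * α = 2 * K * (n + 1) := by
    rw [hK₀]; field_simp
  set H : ℝ → ℝ := fun t => Real.exp (K₀ * t ^ α) * F t - (1/2) * G t with hH
  have hsub : Set.Icc σ ρ ⊆ Set.Ioc 0 R := fun t ht =>
    ⟨lt_of_lt_of_le hσ ht.1, le_trans ht.2 hρR⟩
  have hHdiff : ∀ t ∈ Set.Icc σ ρ, DifferentiableAt ℝ H t := by
    intro t ht
    have ht' := hsub ht
    have h1 : DifferentiableAt ℝ (fun t : ℝ => Real.exp (K₀ * t ^ α)) t := by
      apply DifferentiableAt.exp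
      exact (differentiableAt_const _).mul
        (Real.hasDerivAt_rpow_const (p := α) (Or.inl ht'.1.ne')).differentiableAt
    exact (h1.mul (hF t ht')).sub ((differentiableAt_const _).mul (hG t ht'))
  have key : ∀ t ∈ Set.Ioo σ ρ, 0 ≤ deriv H t := by
    intro t ht
    have ht' : t ∈ Set.Ioc 0 R := ⟨hσ.trans ht.1, ht.2.le.trans hρR⟩
    have ht0 : 0 < t := ht'.1
    have hKt : K * t ^ α ≤ 1/2 := by
      calc K * t ^ α ≤ K * ρ ^ α := by
            exact mul_le_mul_of_nonneg_left
              (Real.rpow_le_rpow ht0.le ht.2.le hα0.le) hK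
        _ ≤ 1/2 := hKρ
    have hE : HasDerivAt (fun t : ℝ => Real.exp (K₀ * t ^ α))
        (Real.exp (K₀ * t ^ α) * (K₀ * (α * t ^ (α - 1)))) t :=
      ((Real.hasDerivAt_rpow_const (p := α) (Or.inl ht0.ne')).const_mul K₀).exp
    have hHd : HasDerivAt H
        (Real.exp (K₀ * t ^ α) * (K₀ * (α * t ^ (α - 1))) * F t
          + Real.exp (K₀ * t ^ α) * deriv F t - (1/2) * deriv G t) t :=
      (hE.mul (hF t ht').hasDerivAt).sub ((hG t ht').hasDerivAt.const_mul (1/2))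
    rw [hHd.deriv]
    set e := Real.exp (K₀ * t ^ α) with he_def
    set c := 1 + K * t ^ α with hc_def
    set p := t ^ (α - 1) with hp_def
    set f := F t with hf_def
    set g := deriv G t with hg_def
    set F' := deriv F t with hF'_def
    have htα : 0 ≤ t ^ α := Real.rpow_nonneg ht0.le α
    have he : 1 ≤ e := Real.one_le_exp (by positivity)
    have hc1 : 1 ≤ c := by nlinarith [mul_nonneg hK htα]
    have hc2 : c ≤ 3/2 := by rw [hc_def]; linarith
    have hc0 : (0:ℝ) < c := by linarith
    have hp : 0 ≤ p := Real.rpow_nonneg ht0.le _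
    have hf : 0 ≤ f := hFpos t ht'
    have hg : 0 ≤ g := hG' t ht'
    have h := hineq t ht' hKt
    set m := K * (n + 1 : ℝ) * p * f with hm_def
    have hm : 0 ≤ m := by positivity
    have h' : g ≤ c * F' + m := by
      have := mul_le_mul_of_nonneg_left h hc0.le
      calc g = c * ((1/c) * g) := by field_simp
        _ ≤ c * (F' + K * (n+1) * p / c * f) := this
        _ = c * F' + m := by rw [hm_def]; field_simp
    have h1 : g ≤ c * (F' + 2*m) := by nlinarith [mul_nonneg hm (sub_nonneg.mpr hc1)]
    have h2 : g/2 ≤ F' + 2*m := by nlinarith [mul_nonneg hg (sub_nonneg.mpr hc2)]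
    have h3 : (0:ℝ) ≤ F' + 2*m := by linarith
    have h4 : F' + 2*m ≤ e * (F' + 2*m) := le_mul_of_one_le_left h3 he
    have h5 : e * (K₀ * (α * p)) * f = 2 * (e * m) := by
      rw [hm_def]
      have : K₀ * (α * p) = (K₀ * α) * p := by ring
      rw [this, hK₀α]; ring
    have h6 : e * (F' + 2*m) = e * F' + 2 * (e * m) := by ring
    linarith [h4, h2, h5, h6]
  have hmono : MonotoneOn H (Set.Icc σ ρ) := by
    apply monotoneOn_of_deriv_nonneg (convex_Icc σ ρ)
    · exact fun t ht => (hHdiff t ht).continuousAt.continuousWithinAt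
    · rw [interior_Icc]
      exact fun t ht => (hHdiff t (Ioo_subset_Icc_self ht)).differentiableWithinAt
    · rw [interior_Icc]; exact key
  have hle : H σ ≤ H ρ :=
    hmono ⟨le_refl σ, hσρ.le⟩ ⟨hσρ.le, le_refl ρ⟩ hσρ.le
  simp only [hH] at hle
  linarith
end

section
/- Let α ∈ (0,1), K ≥ 0, K₀ = 2K(n+1)/α, and let F, G : (0, R] → ℝ be C¹ with G' ≥ 0, F ≥ 0. Suppose for all ρ ∈ (0, R] with Kρ^α ≤ 1/2 that F'(ρ) − (K(n+1)ρ^{α−1}/(1−Kρ^α))·F(ρ) ≤ (1/(1−Kρ^α))·G'(ρ). Then for all 0 < σ < ρ ≤ R with Kρ^α ≤ 1/2, e^{−K₀ρ^α}·F(ρ) ≤ e^{−K₀σ^α}·F(σ) + 2·(G(ρ) − G(σ)). -/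
open Set Filter
open scoped Topology

/-- The ODE/integration step for the upper monotonicity formula:
if `F' − (K(n+1)ρ^{α−1}/(1−Kρ^α))F ≤ G'/(1−Kρ^α)` on `(0,R]` wherever
`Kρ^α ≤ 1/2`, with `F ≥ 0`, `G' ≥ 0`, then for `0 < σ < ρ ≤ R` with
`Kρ^α ≤ 1/2`, `e^{−K₀ρ^α}F(ρ) ≤ e^{−K₀σ^α}F(σ) + 2(G(ρ)−G(σ))`,
where `K₀ = 2K(n+1)/α`. -/
theorem stmt6 (n : ℕ) (α K K₀ R : ℝ) (hα : α ∈ Set.Ioo (0:ℝ) 1) (hK : 0 ≤ K)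
    (hK₀ : K₀ = 2 * K * (n + 1) / α) (hR : 0 < R)
    (F G : ℝ → ℝ)
    (hF : ∀ ρ ∈ Set.Ioc (0:ℝ) R, DifferentiableAt ℝ F ρ)
    (hG : ∀ ρ ∈ Set.Ioc (0:ℝ) R, DifferentiableAt ℝ G ρ)
    (hG' : ∀ ρ ∈ Set.Ioc (0:ℝ) R, 0 ≤ deriv G ρ)
    (hFpos : ∀ ρ ∈ Set.Ioc (0:ℝ) R, 0 ≤ F ρ)
    (hineq : ∀ ρ ∈ Set.Ioc (0:ℝ) R, K * ρ ^ α ≤ 1 / 2 →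
      deriv F ρ - (K * (n + 1) * ρ ^ (α - 1) / (1 - K * ρ ^ α)) * F ρ
        ≤ (1 / (1 - K * ρ ^ α)) * deriv G ρ) :
    ∀ σ ρ : ℝ, 0 < σ → σ < ρ → ρ ≤ R → K * ρ ^ α ≤ 1 / 2 →
      Real.exp (-(K₀ * ρ ^ α)) * F ρ
        ≤ Real.exp (-(K₀ * σ ^ α)) * F σ + 2 * (G ρ - G σ) := by
  intro σ ρ hσ hσρ hρR hKρ
  obtain ⟨hα0, hα1⟩ := hα
  have hK₀0 : 0 ≤ K₀ := by
    rw [hK₀]; positivity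
  have hK₀α : K₀ * α = 2 * K * (n + 1) := by
    rw [hK₀]; field_simp
  set H : ℝ → ℝ := fun t => Real.exp (-(K₀ * t ^ α)) * F t - 2 * G t with hHdef
  have hIsub : Set.Icc σ ρ ⊆ Set.Ioc (0:ℝ) R := fun t ht =>
    ⟨hσ.trans_le ht.1, ht.2.trans hρR⟩
  -- derivative of H at points of (0, R]
  have hHderiv : ∀ t ∈ Set.Icc σ ρ, HasDerivAt H
      (Real.exp (-(K₀ * t ^ α)) * (-(K₀ * (α * t ^ (α - 1)))) * F t
        + Real.exp (-(K₀ * t ^ α)) * deriv F t - 2 * deriv G t) t := by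
    intro t ht
    have ht0 : 0 < t := hσ.trans_le ht.1
    have h1 : HasDerivAt (fun x : ℝ => x ^ α) (α * t ^ (α - 1)) t :=
      Real.hasDerivAt_rpow_const (Or.inl ht0.ne')
    have h2 : HasDerivAt (fun x : ℝ => -(K₀ * x ^ α)) (-(K₀ * (α * t ^ (α - 1)))) t :=
      (h1.const_mul K₀).neg
    have h3 : HasDerivAt (fun x : ℝ => Real.exp (-(K₀ * x ^ α)))
        (Real.exp (-(K₀ * t ^ α)) * (-(K₀ * (α * t ^ (α - 1))))) t := h2.exp
    have hFt := (hF t (hIsub ht)).hasDerivAt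
    have hGt := (hG t (hIsub ht)).hasDerivAt
    have := (h3.mul hFt).sub (hGt.const_mul 2)
    exact this
  have hcont : ContinuousOn H (Set.Icc σ ρ) := fun t ht =>
    (hHderiv t ht).continuousAt.continuousWithinAt
  have hdiff : DifferentiableOn ℝ H (interior (Set.Icc σ ρ)) := by
    rw [interior_Icc]
    exact fun t ht => ((hHderiv t (Set.Ioo_subset_Icc_self ht)).differentiableAt).differentiableWithinAt
  have hderiv_nonpos : ∀ t ∈ interior (Set.Icc σ ρ), deriv H t ≤ 0 := by
    rw [interior_Icc]
    intro t ht
    have ht' : t ∈ Set.Icc σ ρ := Set.Ioo_subset_Icc_self ht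
    have ht0 : 0 < t := hσ.trans_le ht'.1
    have htIoc : t ∈ Set.Ioc (0:ℝ) R := hIsub ht'
    have hKt : K * t ^ α ≤ 1 / 2 := by
      have : t ^ α ≤ ρ ^ α := Real.rpow_le_rpow ht0.le (ht'.2) hα0.le
      nlinarith
    have hDpos : (0:ℝ) < 1 - K * t ^ α := by linarith
    have hDhalf : (1:ℝ)/2 ≤ 1 - K * t ^ α := by linarith
    have hFt : 0 ≤ F t := hFpos t htIoc
    have hGt' : 0 ≤ deriv G t := hG' t htIoc
    have hP : 0 ≤ t ^ (α - 1) := Real.rpow_nonneg ht0.le _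
    have hineq' := hineq t htIoc hKt
    have hc : 0 ≤ K * (n + 1) * t ^ (α - 1) := by positivity
    -- bound the coefficient: c / D ≤ 2c
    have h1 : K * (n + 1) * t ^ (α - 1) / (1 - K * t ^ α) * F t
        ≤ 2 * (K * (n + 1) * t ^ (α - 1)) * F t := by
      apply mul_le_mul_of_nonneg_right _ hFt
      rw [div_le_iff₀ hDpos]
      nlinarith
    have h2 : (1 / (1 - K * t ^ α)) * deriv G t ≤ 2 * deriv G t := by
      apply mul_le_mul_of_nonneg_right _ hGt'
      rw [div_le_iff₀ hDpos]
      linarith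
    have hL : deriv F t - 2 * (K * (n + 1) * t ^ (α - 1)) * F t ≤ 2 * deriv G t := by
      nlinarith
    have hE : HasDerivAt H
        (Real.exp (-(K₀ * t ^ α)) * (-(K₀ * (α * t ^ (α - 1)))) * F t
          + Real.exp (-(K₀ * t ^ α)) * deriv F t - 2 * deriv G t) t := hHderiv t ht'
    rw [hE.deriv]
    set E := Real.exp (-(K₀ * t ^ α)) with hEdef
    have hE0 : 0 < E := Real.exp_pos _
    have hE1 : E ≤ 1 := by
      rw [hEdef]
      apply Real.exp_le_one_iff.mpr
      have : 0 ≤ K₀ * t ^ α := by positivity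
      linarith
    have hKα : K₀ * (α * t ^ (α - 1)) = 2 * (K * (n + 1) * t ^ (α - 1)) := by
      have : K₀ * (α * t ^ (α - 1)) = (K₀ * α) * t ^ (α - 1) := by ring
      rw [this, hK₀α]; ring
    have goal1 : E * (-(K₀ * (α * t ^ (α - 1)))) * F t + E * deriv F t
        = E * (deriv F t - 2 * (K * (n + 1) * t ^ (α - 1)) * F t) := by
      rw [hKα] at *
      ring
    rw [sub_nonpos, goal1]
    rcases le_or_gt (deriv F t - 2 * (K * (n + 1) * t ^ (α - 1)) * F t) 0 with h | h
    · nlinarith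
    · nlinarith
  have hanti : AntitoneOn H (Set.Icc σ ρ) :=
    antitoneOn_of_deriv_nonpos (convex_Icc σ ρ) hcont hdiff hderiv_nonpos
  have := hanti (Set.left_mem_Icc.mpr hσρ.le) (Set.right_mem_Icc.mpr hσρ.le) hσρ.le
  simp only [hHdef] at this
  linarith
end

section
/- Let M be a countably n-rectifiable set in ℝ^{n+k}, T ⊂ ℝ^{n+k} an n-dimensional subspace with orthogonal projection p_T, and ζ ∈ C¹_c(ℝ^{n+k}). Writing x' = x − p_T(x) for x ∈ ℝ^{n+k} and X(x) = ζ²(x)·x', the operator norm of d^M X := DX ∘ P_{T_xM} satisfies ‖d^M X‖ ≤ 2|ζ||∇^M ζ||x'| + c(n,k)·ζ²·|p_{T_xM} − p_T|, where c(n,k) depends only on n and k. -/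
/-!
By the product rule, `d^M X = 2ζ (x' ⊗ P_{T_xM}∇ζ) + ζ² (Id − P_T) ∘ P_{T_xM}`, and the rank-one
first term has norm exactly `2|ζ||∇^Mζ||x'|`. Since `(Id − P_T) ∘ P_T = 0`, the second term equals
`ζ² (Id − P_T) ∘ (P_{T_xM} − P_T)`; as `Id − P_T` is an orthogonal projection, its norm is at most
`ζ² ‖P_{T_xM} − P_T‖`, and the operator norm is bounded by the Frobenius norm. So `c = 1` works.
-/

open scoped RealInnerProductSpace InnerProduct

abbrev Euc (m : ℕ) := EuclideanSpace ℝ (Fin m)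

section

variable {E F : Type*} [NormedAddCommGroup E] [InnerProductSpace ℝ E]
  [NormedAddCommGroup F] [InnerProductSpace ℝ F] [CompleteSpace F]

theorem ContinuousLinearMap.norm_le_sqrt_trace_adjoint_comp_self [FiniteDimensional ℝ E]
    (A : E →L[ℝ] F) :
    ‖A‖ ≤ √(LinearMap.trace ℝ E ((A† ∘L A : E →L[ℝ] E) : E →ₗ[ℝ] E)) := by
  set b := stdOrthonormalBasis ℝ E
  have htrace : LinearMap.trace ℝ E ((A† ∘L A : E →L[ℝ] E) : E →ₗ[ℝ] E)
      = ∑ i, ‖A (b i)‖ ^ 2 := by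
    simp [LinearMap.trace_eq_sum_inner _ b, adjoint_inner_right]
  rw [htrace, ← adjoint.norm_map A]
  refine A†.opNorm_le_bound (Real.sqrt_nonneg _) fun v => ?_
  rw [← Real.sqrt_sq (norm_nonneg ((A†) v)), ← Real.sqrt_sq (norm_nonneg v),
    ← Real.sqrt_mul (by positivity)]
  gcongr
  -- `‖A† v‖² = ∑ ⟪b i, A† v⟫² = ∑ ⟪A (b i), v⟫²`, then Cauchy–Schwarz termwise
  rw [← b.sum_sq_inner_right, Finset.sum_mul]
  gcongr with i
  rw [adjoint_inner_right, ← mul_pow, ← sq_abs]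
  gcongr
  exact abs_real_inner_le_norm _ _

theorem Submodule.norm_id_sub_starProjection_comp_le (K : Submodule ℝ E)
    [K.HasOrthogonalProjection] (Q : E →L[ℝ] E) :
    ‖(ContinuousLinearMap.id ℝ E - K.starProjection) ∘L Q‖ ≤ ‖Q - K.starProjection‖ := by
  rw [← K.starProjection_orthogonal]
  have hzero : Kᗮ.starProjection ∘L K.starProjection = 0 := by
    rw [K.starProjection_orthogonal, ContinuousLinearMap.sub_comp, ContinuousLinearMap.id_comp,
      ← ContinuousLinearMap.mul_def, K.isIdempotentElem_starProjection.eq, sub_self]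
  have hcomp : Kᗮ.starProjection ∘L Q = Kᗮ.starProjection ∘L (Q - K.starProjection) := by
    rw [ContinuousLinearMap.comp_sub, hzero, sub_zero]
  calc ‖Kᗮ.starProjection ∘L Q‖ = ‖Kᗮ.starProjection ∘L (Q - K.starProjection)‖ := by rw [hcomp]
    _ ≤ ‖Kᗮ.starProjection‖ * ‖Q - K.starProjection‖ := ContinuousLinearMap.opNorm_comp_le _ _
    _ ≤ ‖Q - K.starProjection‖ := mul_le_of_le_one_left (norm_nonneg _) Kᗮ.starProjection_norm_le

theorem norm_fderiv_comp_eq_norm_adjoint_gradient [CompleteSpace E] (f : E → ℝ) (x : E)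
    (R : F →L[ℝ] E) : ‖fderiv ℝ f x ∘L R‖ = ‖(R†) (gradient f x)‖ := by
  have : fderiv ℝ f x ∘L R = innerSL ℝ ((R†) (gradient f x)) := by
    ext v
    rw [ContinuousLinearMap.comp_apply, innerSL_apply_apply, gradient,
      ContinuousLinearMap.adjoint_inner_left, InnerProductSpace.toDual_symm_apply]
  rw [this, innerSL_apply_norm]

theorem norm_fderiv_sq_smul_comp_le {H : Type*} [NormedAddCommGroup H] [NormedSpace ℝ H]
    [CompleteSpace E] {ζ : E → ℝ} {x : E} (hζ : DifferentiableAt ℝ ζ x) (L : E →L[ℝ] H)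
    (R : F →L[ℝ] E) :
    ‖fderiv ℝ (fun y => ζ y ^ 2 • L y) x ∘L R‖
      ≤ 2 * |ζ x| * ‖(R†) (gradient ζ x)‖ * ‖L x‖ + ζ x ^ 2 * ‖L ∘L R‖ := by
  have hderiv : HasFDerivAt (fun y => ζ y ^ 2 • L y)
      (ζ x ^ 2 • L + ((2 * ζ x) • fderiv ℝ ζ x).smulRight (L x)) x := by
    have h := (hζ.hasFDerivAt.pow 2).smul L.hasFDerivAt
    rwa [pow_one, nsmul_eq_mul, Nat.cast_ofNat] at h
  have hrankOne : ((2 * ζ x) • fderiv ℝ ζ x).smulRight (L x) ∘L R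
      = ((2 * ζ x) • (fderiv ℝ ζ x ∘L R)).smulRight (L x) := by
    ext v; simp
  rw [hderiv.fderiv, ContinuousLinearMap.add_comp, ContinuousLinearMap.smul_comp, hrankOne]
  calc _ ≤ ‖ζ x ^ 2 • (L ∘L R)‖ + ‖((2 * ζ x) • (fderiv ℝ ζ x ∘L R)).smulRight (L x)‖ :=
        norm_add_le _ _
    _ = _ := by
      rw [norm_smul, ContinuousLinearMap.norm_smulRight_apply, norm_smul,
        norm_fderiv_comp_eq_norm_adjoint_gradient, Real.norm_eq_abs, Real.norm_eq_abs, abs_mul,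
        abs_two, abs_sq]
      ring

end

/-- There is a constant `c = c(n,k)` such that for any
`n`-dimensional subspaces `T` (the reference plane) and `Tx` (the approximate
tangent space `T_xM` of a countably `n`-rectifiable set at `x`), any
`ζ ∈ C¹_c(ℝ^{n+k})`, and `X(y) = ζ(y)²·(y − p_T y)` (so `x' = x − p_T x`),
`‖d^M X‖ = ‖DX(x) ∘ P_{T_xM}‖
  ≤ 2|ζ||∇^Mζ||x'| + c·ζ²·|p_{T_xM} − p_T|`,
where `|p_{T_xM} − p_T| = √(tr((P_{T_xM} − P_T)²))` is the Frobenius distance. -/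
theorem stmt12 (n k : ℕ) :
    ∃ c : ℝ, 0 < c ∧
      ∀ (T Tx : Submodule ℝ (Euc (n + k))),
        Module.finrank ℝ T = n → Module.finrank ℝ Tx = n →
        ∀ (PT PTx : Euc (n + k) →L[ℝ] Euc (n + k)),
          PT = T.subtypeL.comp T.orthogonalProjectionOnto →
          PTx = Tx.subtypeL.comp Tx.orthogonalProjectionOnto →
        ∀ ζ : Euc (n + k) → ℝ, ContDiff ℝ 1 ζ → HasCompactSupport ζ →
        ∀ (X : Euc (n + k) → Euc (n + k)),
          X = (fun y => (ζ y) ^ 2 • (y - PT y)) →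
        ∀ x : Euc (n + k),
          ‖(fderiv ℝ X x).comp PTx‖
            ≤ 2 * |ζ x| * ‖PTx (gradient ζ x)‖ * ‖x - PT x‖
              + c * (ζ x) ^ 2 *
                Real.sqrt (LinearMap.trace ℝ (Euc (n + k))
                  (((PTx - PT).comp (PTx - PT)) : Euc (n + k) →ₗ[ℝ] Euc (n + k))) := by
  refine ⟨1, one_pos, fun T Tx _ _ PT PTx hPT hPTx ζ hζ _ X hX x => ?_⟩
  set I := ContinuousLinearMap.id ℝ (Euc (n + k))
  have hPT' : PT = T.starProjection := hPT
  have hXL : X = fun y => ζ y ^ 2 • (I - PT) y := hX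
  have hsa : IsSelfAdjoint PTx := hPTx ▸ isSelfAdjoint_starProjection Tx
  have hfrob : ‖PTx - PT‖ ≤ √(LinearMap.trace ℝ (Euc (n + k))
      (((PTx - PT).comp (PTx - PT)) : Euc (n + k) →ₗ[ℝ] Euc (n + k))) := by
    have h := (PTx - PT).norm_le_sqrt_trace_adjoint_comp_self
    rwa [(hsa.sub (hPT' ▸ isSelfAdjoint_starProjection T)).adjoint_eq] at h
  calc ‖fderiv ℝ X x ∘L PTx‖
      ≤ 2 * |ζ x| * ‖(PTx†) (gradient ζ x)‖ * ‖(I - PT) x‖ + ζ x ^ 2 * ‖(I - PT) ∘L PTx‖ :=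
        hXL ▸ norm_fderiv_sq_smul_comp_le (hζ.differentiable one_ne_zero x) _ _
    _ ≤ _ := by
      rw [hsa.adjoint_eq, one_mul]
      gcongr
      · rfl
      · exact (hPT' ▸ T.norm_id_sub_starProjection_comp_le PTx).trans hfrob
end
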